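/- arXiv:2405.06825 — 3 statements merged into one kernel-verified Lean document; each statement's English description precedes it below -/
import Mathlib

section
/- Let K be a perfect field with algebraic closure K̄ and let K ⊆ L ⊆ M be finite extensions inside K̄, with L̃ the Galois closure of L over K. If M ∩ L̃ = L and [M : L] = r_K(M)/r_K(L), then M/L is a Galois extension. -/
/-!
Since `M ∩ L̃ = L`, every `K`-automorphism of `M` maps `L` into `M ∩ L̃ = L`, so restriction is a
homomorphism `Aut(M/K) → Aut(L/K)` whose kernel consists of the `L`-automorphisms of `M`. Hence
`r_K(M) ≤ r_K(L) · |Aut(M/L)| ≤ r_K(L) · [M : L]`, and the hypothesis forces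
`|Aut(M/L)| = [M : L]`, i.e. `M/L` is Galois.
-/

/-- The Galois closure inside the algebraic closure of a finite extension `L/K`. -/
noncomputable def galoisClosure (K : Type*) [Field K]
    (L : IntermediateField K (AlgebraicClosure K)) : IntermediateField K (AlgebraicClosure K) :=
  IntermediateField.normalClosure K ↥L (AlgebraicClosure K)

/-- The cluster size `r_K(L)` of a finite extension `L/K`, which equals `|Aut(L/K)|`
(the number of roots, lying in `L`, of the minimal polynomial of a primitive element of
`L/K`). -/
noncomputable def clusterSize (K : Type*) [Field K]
    (L : IntermediateField K (AlgebraicClosure K)) : ℕ :=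
  Nat.card (↥L ≃ₐ[K] ↥L)

namespace AlgEquiv

variable {K L M : Type*} [Field K] [Field L] [Field M] [Algebra K L] [Algebra K M] [Algebra L M]
  [IsScalarTower K L M]

noncomputable def restrictOfStable (σ : M ≃ₐ[K] M)
    (h : ∀ x : L, σ (algebraMap L M x) ∈ (algebraMap L M).range) : L →ₐ[K] L :=
  let ι := IsScalarTower.toAlgHom K L M
  (ofInjectiveField ι).symm.toAlgHom.comp ((σ.toAlgHom.comp ι).codRestrict ι.range h)

@[simp]
theorem algebraMap_restrictOfStable (σ : M ≃ₐ[K] M)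
    (h : ∀ x : L, σ (algebraMap L M x) ∈ (algebraMap L M).range) (x : L) :
    algebraMap L M (restrictOfStable σ h x) = σ (algebraMap L M x) :=
  congrArg Subtype.val <| (ofInjectiveField (IsScalarTower.toAlgHom K L M)).apply_symm_apply
    ((σ.toAlgHom.comp (IsScalarTower.toAlgHom K L M)).codRestrict _ h x)

variable (hL : ∀ σ : M ≃ₐ[K] M, ∀ x : L, σ (algebraMap L M x) ∈ (algebraMap L M).range)
include hL

noncomputable def restrictHomOfStable : (M ≃ₐ[K] M) →* (L ≃ₐ[K] L) where
  toFun σ := ofAlgHom (restrictOfStable σ (hL σ)) (restrictOfStable σ.symm (hL σ.symm))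
    (AlgHom.ext fun _ => (algebraMap L M).injective (by simp [-algebraMap.coe_inj]))
    (AlgHom.ext fun _ => (algebraMap L M).injective (by simp [-algebraMap.coe_inj]))
  map_one' := AlgEquiv.ext fun _ => (algebraMap L M).injective (by simp [-algebraMap.coe_inj])
  map_mul' _ _ := AlgEquiv.ext fun _ => (algebraMap L M).injective (by simp [-algebraMap.coe_inj])

theorem algebraMap_restrictHomOfStable (σ : M ≃ₐ[K] M) (x : L) :
    algebraMap L M (restrictHomOfStable hL σ x) = σ (algebraMap L M x) :=
  algebraMap_restrictOfStable σ (hL σ) x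

theorem ker_restrictHomOfStable_le_range_restrictScalarsHom :
    (restrictHomOfStable hL).ker ≤ (restrictScalarsHom K (S := L) (A := M)).range := by
  intro σ hσ
  have hfix (x : L) : σ (algebraMap L M x) = algebraMap L M x := by
    rw [← algebraMap_restrictHomOfStable hL, MonoidHom.mem_ker.mp hσ, one_apply]
  exact ⟨{ σ with commutes' := hfix }, rfl⟩

theorem card_le_card_mul_card_of_stable [Finite (L ≃ₐ[K] L)] [Finite (M ≃ₐ[L] M)] :
    Nat.card (M ≃ₐ[K] M) ≤ Nat.card (L ≃ₐ[K] L) * Nat.card (M ≃ₐ[L] M) := by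
  let φ := restrictHomOfStable hL
  let ψ := restrictScalarsHom K (S := L) (A := M)
  have hψ : ψ.range ≃* (M ≃ₐ[L] M) := (MonoidHom.ofInjective (restrictScalarsHom_injective K)).symm
  have : Finite ψ.range := .of_equiv _ hψ.toEquiv.symm
  calc Nat.card (M ≃ₐ[K] M) = Nat.card φ.range * Nat.card φ.ker := by
        rw [Subgroup.card_eq_card_quotient_mul_card_subgroup φ.ker,
          Nat.card_congr (QuotientGroup.quotientKerEquivRange φ).toEquiv]
    _ ≤ Nat.card (L ≃ₐ[K] L) * Nat.card ψ.range :=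
        Nat.mul_le_mul (Subgroup.card_le_card_group _)
          (Subgroup.card_le_of_le (ker_restrictHomOfStable_le_range_restrictScalarsHom hL))
    _ = Nat.card (L ≃ₐ[K] L) * Nat.card (M ≃ₐ[L] M) := by rw [Nat.card_congr hψ.toEquiv]

end AlgEquiv

open Module in
theorem IsGalois.of_finrank_mul_card_aut_eq {K L M : Type*} [Field K] [Field L] [Field M]
    [Algebra K L] [Algebra K M] [Algebra L M] [IsScalarTower K L M] [FiniteDimensional K M]
    (hL : ∀ σ : M ≃ₐ[K] M, ∀ x : L, σ (algebraMap L M x) ∈ (algebraMap L M).range)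
    (h : finrank L M * Nat.card (L ≃ₐ[K] L) = Nat.card (M ≃ₐ[K] M)) : IsGalois L M := by
  have : FiniteDimensional K L := .left K L M
  have : FiniteDimensional L M := .right K L M
  refine of_card_aut_eq_finrank L M (le_antisymm ?_ ?_)
  · rw [Nat.card_eq_fintype_card]
    exact AlgEquiv.card_le
  · refine Nat.le_of_mul_le_mul_right ?_ (Nat.card_pos (α := L ≃ₐ[K] L))
    rw [h, mul_comm]
    exact AlgEquiv.card_le_card_mul_card_of_stable hL

theorem IntermediateField.algEquiv_algebraMap_mem_range_of_inf_normalClosure_eq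
    {K Ω : Type*} [Field K] [Field Ω] [Algebra K Ω] {L M : IntermediateField K Ω}
    (hLM : L ≤ M) (h : M ⊓ normalClosure K L Ω = L)
    (σ : extendScalars hLM ≃ₐ[K] extendScalars hLM) (x : L) :
    σ (algebraMap L (extendScalars hLM) x) ∈ (algebraMap L (extendScalars hLM)).range := by
  let τ : L →ₐ[K] Ω := (((extendScalars hLM).val.restrictScalars K).comp σ.toAlgHom).comp
    (IsScalarTower.toAlgHom K L (extendScalars hLM))
  have hxM : τ x ∈ M := (σ (algebraMap L _ x)).2
  have hxL : τ x ∈ L := h.le ⟨hxM, τ.fieldRange_le_normalClosure ⟨x, rfl⟩⟩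
  exact ⟨⟨τ x, hxL⟩, Subtype.ext rfl⟩

theorem stmt_14_general (K : Type*) [Field K]
    (L M : IntermediateField K (AlgebraicClosure K)) [FiniteDimensional K ↥M]
    (hLM : L ≤ M)
    (hint : M ⊓ galoisClosure K L = L)
    (hdeg : Module.finrank ↥L ↥(IntermediateField.extendScalars hLM) * clusterSize K L =
      clusterSize K M) :
    IsGalois ↥L ↥(IntermediateField.extendScalars hLM) :=
  have : FiniteDimensional K (IntermediateField.extendScalars hLM) := ‹FiniteDimensional K M›
  IsGalois.of_finrank_mul_card_aut_eq
    (IntermediateField.algEquiv_algebraMap_mem_range_of_inf_normalClosure_eq hLM hint) hdeg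

/-- Let `K` be a perfect field and `K ⊆ L ⊆ M` finite extensions inside `K̄`,
with `L̃` the Galois closure of `L/K`. If `M ∩ L̃ = L` and `[M : L] = r_K(M)/r_K(L)`
(equivalently `[M : L] · r_K(L) = r_K(M)`, the quotient being exact), then `M/L` is a
Galois extension. -/
theorem stmt_14 (K : Type*) [Field K] [PerfectField K]
    (L M : IntermediateField K (AlgebraicClosure K)) [FiniteDimensional K ↥M]
    (hLM : L ≤ M)
    (hint : M ⊓ galoisClosure K L = L)
    (hdeg : Module.finrank ↥L ↥(IntermediateField.extendScalars hLM) * clusterSize K L =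
      clusterSize K M) :
    IsGalois ↥L ↥(IntermediateField.extendScalars hLM) :=
  stmt_14_general K L M hLM hint hdeg
end

section
/- Let K be a perfect field and L/K a nontrivial finite extension inside an algebraic closure K̄, with Galois closure L̃, G = Gal(L̃/K) and H = Gal(L̃/L). Then N = L̃^{N_G(H)}, the fixed field of the normalizer of H in G, is the unique intermediate field K ⊆ N ⊆ L such that L/N is Galois with [L : N] = r_K(L). -/
/-- `N` is an intermediate field of `L/K` such that `L/N` is Galois of degree `r`. -/
def IsGaloisIntermediateOfDegree (K : Type*) [Field K]
    (N L : IntermediateField K (AlgebraicClosure K)) (r : ℕ) : Prop :=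
  ∃ h : N ≤ L, IsGalois ↥N ↥(IntermediateField.extendScalars h) ∧
    Module.finrank ↥N ↥(IntermediateField.extendScalars h) = r

open IntermediateField

namespace IntermediateField

section Map

variable {K E Ω : Type*} [Field K] [Field E] [Field Ω] [Algebra K E] [Algebra K Ω]
  (f : E →ₐ[K] Ω) {N L : IntermediateField K E} (h : N ≤ L)

theorem isGalois_extendScalars_map_iff :
    IsGalois (N.map f) (extendScalars (map_mono f h)) ↔ IsGalois N (extendScalars h) := by
  let e₁ : N ≃+* N.map f := (N.equivMap f).toRingEquiv
  let e₂ : extendScalars h ≃+* extendScalars (map_mono f h) := (L.equivMap f).toRingEquiv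
  have hcomp : (algebraMap (N.map f) (extendScalars (map_mono f h))).comp (e₁ : N →+* N.map f) =
      (e₂ : extendScalars h →+* extendScalars (map_mono f h)).comp
        (algebraMap N (extendScalars h)) := by
    ext; rfl
  refine ⟨fun _ ↦ IsGalois.of_equiv_equiv (f := e₁.symm) (g := e₂.symm) ?_,
    fun _ ↦ IsGalois.of_equiv_equiv hcomp⟩
  refine RingHom.ext fun x ↦ e₂.injective ?_
  simpa using (DFunLike.congr_fun hcomp (e₁.symm x)).symm

theorem finrank_extendScalars_map :
    Module.finrank (N.map f) (extendScalars (map_mono f h)) =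
      Module.finrank N (extendScalars h) := by
  rw [← relfinrank_eq_finrank_of_le, ← relfinrank_eq_finrank_of_le, relfinrank_map_map]

end Map

section Normalizer

variable {K E : Type*} [Field K] [Field E] [Algebra K E] [FiniteDimensional K E] [IsGalois K E]

open scoped Pointwise in
theorem map_eq_self_iff_mem_normalizer (L : IntermediateField K E) (σ : Gal(E/K)) :
    L.map σ = L ↔ σ ∈ Subgroup.normalizer (L.fixingSubgroup : Set Gal(E/K)) := by
  rw [Subgroup.mem_normalizer_iff_map_conj_eq]
  change _ ↔ MulAut.conj σ • L.fixingSubgroup = _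
  rw [← IsGalois.map_fixingSubgroup]
  exact ⟨congrArg _, fun h ↦ by
    simpa only [IsGalois.fixedField_fixingSubgroup] using congrArg fixedField h⟩

theorem normal_extendScalars_iff {N L : IntermediateField K E} (h : N ≤ L) :
    Normal N (extendScalars h) ↔
      N.fixingSubgroup ≤ Subgroup.normalizer (L.fixingSubgroup : Set Gal(E/K)) := by
  have hmap (τ : N.fixingSubgroup) :
      (extendScalars h).map (fixingSubgroupEquiv N τ : E →ₐ[N] E) = extendScalars h ↔
        L.map (τ : Gal(E/K)) = L := by
    simp only [← SetLike.coe_set_eq, coe_map, coe_extendScalars]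
    rfl
  rw [normal_iff_forall_map_eq', (fixingSubgroupEquiv N).surjective.forall]
  simp only [hmap, map_eq_self_iff_mem_normalizer]
  exact Subtype.forall

def normalizerFixedField (L : IntermediateField K E) : IntermediateField K E :=
  fixedField (Subgroup.normalizer (L.fixingSubgroup : Set Gal(E/K)))

variable {L : IntermediateField K E}

theorem normalizerFixedField_le_iff {N : IntermediateField K E} :
    L.normalizerFixedField ≤ N ↔
      N.fixingSubgroup ≤ Subgroup.normalizer (L.fixingSubgroup : Set Gal(E/K)) := by
  conv_lhs => rw [← IsGalois.fixedField_fixingSubgroup N]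
  rw [le_iff_le, normalizerFixedField, fixingSubgroup_fixedField]

theorem normal_extendScalars_iff_normalizerFixedField_le {N : IntermediateField K E}
    (h : N ≤ L) : Normal N (extendScalars h) ↔ L.normalizerFixedField ≤ N := by
  rw [normal_extendScalars_iff, normalizerFixedField_le_iff]

theorem normalizerFixedField_le_self : L.normalizerFixedField ≤ L :=
  normalizerFixedField_le_iff.2 Subgroup.le_normalizer

instance isGalois_extendScalars_normalizerFixedField :
    IsGalois L.normalizerFixedField (extendScalars (normalizerFixedField_le_self (L := L))) where
  to_isSeparable := Algebra.isSeparable_tower_bot_of_isSeparable _ _ E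
  to_normal := (normal_extendScalars_iff_normalizerFixedField_le _).2 le_rfl

theorem _root_.AlgEquiv.liftNormal_mem_normalizer (τ : L ≃ₐ[K] L) :
    τ.liftNormal E ∈ Subgroup.normalizer (L.fixingSubgroup : Set Gal(E/K)) := by
  rw [← map_eq_self_iff_mem_normalizer]
  refine eq_of_le_of_finrank_eq ?_ (L.equivMap _).toLinearEquiv.finrank_eq.symm
  rintro _ ⟨y, hy, rfl⟩
  exact (τ.liftNormal_commutes E ⟨y, hy⟩).symm ▸ (τ ⟨y, hy⟩).2

theorem apply_eq_self_of_mem_normalizerFixedField (τ : L ≃ₐ[K] L) {x : L}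
    (hx : (x : E) ∈ L.normalizerFixedField) : τ x = x :=
  Subtype.ext <| (τ.liftNormal_commutes E x).symm.trans (hx ⟨_, τ.liftNormal_mem_normalizer⟩)

theorem card_aut_extendScalars_normalizerFixedField :
    Nat.card (extendScalars (normalizerFixedField_le_self (L := L)) ≃ₐ[L.normalizerFixedField]
      extendScalars (normalizerFixedField_le_self (L := L))) = Nat.card (L ≃ₐ[K] L) := by
  refine Nat.card_congr (Equiv.ofBijective (fun σ ↦ (σ.restrictScalars K : L ≃ₐ[K] L))
    ⟨AlgEquiv.restrictScalars_injective K, fun τ ↦ ?_⟩)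
  exact ⟨AlgEquiv.ofRingEquiv (f := τ.toRingEquiv) fun x ↦
    apply_eq_self_of_mem_normalizerFixedField τ (x := ⟨x, normalizerFixedField_le_self x.2⟩) x.2,
    rfl⟩

theorem finrank_extendScalars_normalizerFixedField :
    Module.finrank L.normalizerFixedField (extendScalars (normalizerFixedField_le_self (L := L))) =
      Nat.card (L ≃ₐ[K] L) := by
  rw [← IsGalois.card_aut_eq_finrank, card_aut_extendScalars_normalizerFixedField]

theorem eq_normalizerFixedField_of_normal {N : IntermediateField K E} (h : N ≤ L)
    [Normal N (extendScalars h)]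
    (hdeg : Module.finrank N (extendScalars h) = Nat.card (L ≃ₐ[K] L)) :
    N = L.normalizerFixedField := by
  have hle := (normal_extendScalars_iff_normalizerFixedField_le h).1 ‹_›
  have htower := relfinrank_mul_relfinrank hle h
  rw [relfinrank_eq_finrank_of_le h, relfinrank_eq_finrank_of_le normalizerFixedField_le_self,
    hdeg, finrank_extendScalars_normalizerFixedField] at htower
  have hrel : relfinrank L.normalizerFixedField N = 1 :=
    (Nat.mul_eq_right Nat.card_pos.ne').1 htower
  exact le_antisymm (relfinrank_eq_one_iff.1 hrel) hle

end Normalizer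

end IntermediateField

theorem isGaloisIntermediateOfDegree_map_iff {K E : Type*} [Field K] [Field E] [Algebra K E]
    (f : E →ₐ[K] AlgebraicClosure K) {N Lc : IntermediateField K E}
    {L : IntermediateField K (AlgebraicClosure K)} (hL : Lc.map f = L) (h : N ≤ Lc) {r : ℕ} :
    IsGaloisIntermediateOfDegree K (N.map f) L r ↔
      IsGalois N (extendScalars h) ∧ Module.finrank N (extendScalars h) = r := by
  subst hL
  rw [← isGalois_extendScalars_map_iff f h, ← finrank_extendScalars_map f h]
  exact ⟨fun ⟨_, hh⟩ ↦ hh, fun hh ↦ ⟨map_mono f h, hh⟩⟩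

theorem stmt_15_general (K : Type*) [Field K] [PerfectField K]
    (L : IntermediateField K (AlgebraicClosure K)) [FiniteDimensional K ↥L] :
    IsGaloisIntermediateOfDegree K
        (IntermediateField.map (galoisClosure K L).val
          (IntermediateField.fixedField
            (Subgroup.normalizer (IntermediateField.fixingSubgroup
                (IntermediateField.comap (galoisClosure K L).val L) : Set _))))
        L (clusterSize K L) ∧
      ∀ N' : IntermediateField K (AlgebraicClosure K),
        IsGaloisIntermediateOfDegree K N' L (clusterSize K L) →
          N' = IntermediateField.map (galoisClosure K L).val
            (IntermediateField.fixedField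
              (Subgroup.normalizer (IntermediateField.fixingSubgroup
                  (IntermediateField.comap (galoisClosure K L).val L) : Set _))) := by
  set E := galoisClosure K L
  have : FiniteDimensional K E := normalClosure.is_finiteDimensional K L (AlgebraicClosure K)
  have : Normal K E := normalClosure.normal K L (AlgebraicClosure K)
  have : IsGalois K E := ⟨⟩
  set Lc := L.comap E.val
  have hL : Lc.map E.val = L := map_comap_eq_self (by rw [fieldRange_val]; exact le_normalClosure L)
  have hcard : Nat.card (Lc ≃ₐ[K] Lc) = clusterSize K L :=
    Nat.card_congr (AlgEquiv.autCongr ((Lc.equivMap E.val).trans (equivOfEq hL))).toEquiv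
  refine ⟨?_, fun N' hN' ↦ ?_⟩
  · rw [← hcard]
    exact (isGaloisIntermediateOfDegree_map_iff E.val hL normalizerFixedField_le_self).2
      ⟨inferInstance, finrank_extendScalars_normalizerFixedField⟩
  · have hN'L : N' ≤ L := hN'.1
    have hN'map : (N'.comap E.val).map E.val = N' :=
      map_comap_eq_self (by rw [fieldRange_val]; exact hN'L.trans (le_normalClosure L))
    rw [← hN'map, ← hcard, isGaloisIntermediateOfDegree_map_iff E.val hL ((gc_map_comap E.val).monotone_u hN'L)] at hN'
    obtain ⟨_, hdeg⟩ := hN'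
    rw [← hN'map]
    exact congrArg _ (eq_normalizerFixedField_of_normal _ hdeg)

/-- Let `K` be a perfect field and `L/K` a nontrivial finite extension inside
`K̄`, with Galois closure `L̃`, `G = Gal(L̃/K)` and `H = Gal(L̃/L)`. Then
`N = L̃^{N_G(H)}`, the fixed field of the normalizer of `H` in `G`, is the unique
intermediate field `K ⊆ N ⊆ L` such that `L/N` is Galois with `[L : N] = r_K(L)`. -/
theorem stmt_15 (K : Type*) [Field K] [PerfectField K]
    (L : IntermediateField K (AlgebraicClosure K)) [FiniteDimensional K ↥L] (hL : L ≠ ⊥) :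
    IsGaloisIntermediateOfDegree K
        (IntermediateField.map (galoisClosure K L).val
          (IntermediateField.fixedField
            (Subgroup.normalizer (IntermediateField.fixingSubgroup
                (IntermediateField.comap (galoisClosure K L).val L) : Set _))))
        L (clusterSize K L) ∧
      ∀ N' : IntermediateField K (AlgebraicClosure K),
        IsGaloisIntermediateOfDegree K N' L (clusterSize K L) →
          N' = IntermediateField.map (galoisClosure K L).val
            (IntermediateField.fixedField
              (Subgroup.normalizer (IntermediateField.fixingSubgroup
                  (IntermediateField.comap (galoisClosure K L).val L) : Set _))) :=
  stmt_15_general K L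
end

section
/- Let K be a perfect field and suppose M/K is obtained by strong cluster magnification from L/K with magnification factor d (i.e., via a finite Galois extension F/K of degree d with L̃ ∩ F = K and LF = M, where L̃ is the Galois closure of L over K). Then t_K(M) = d · t_K(L) and u_K(M) = u_K(L), where for a finite extension P/K, t_K(P) = [F_P : K] with F_P the unique largest intermediate field of P/K that is Galois over K, and u_K(P) = [P : F_P]. -/
/-- `F₀` is the unique largest intermediate field of `P/K` that is Galois over `K`. -/
def IsMaxGaloisSubextension (K : Type*) [Field K]
    (F₀ P : IntermediateField K (AlgebraicClosure K)) : Prop :=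
  F₀ ≤ P ∧ IsGalois K ↥F₀ ∧
    ∀ E : IntermediateField K (AlgebraicClosure K), E ≤ P → IsGalois K ↥E → E ≤ F₀

/-!
Write `L̃` for the Galois closure of `L`. As `F/K` is Galois and `L̃ ∩ F = K`, the field `F`
is linearly disjoint from every subfield `X` of `L̃`, so `[XF : K] = [X : K] [F : K]`; in
particular `[M : K] = [L : K] [F : K]` and `M ∩ L̃ = L`. The largest Galois subextension `F_M`
of `M` contains `F` and lies in `L̃F`, and comparing degrees through
`[F_M L̃ : K] [F_M ∩ L̃ : K] = [F_M : K] [L̃ : K]` gives `F_M = (F_M ∩ L̃) F`. Since `F_M ∩ L̃` is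
Galois and contained in `M ∩ L̃ = L`, it lies in `F_L`, whence `F_M = F_L F`. Both formulas
then follow from the tower law.
-/

open Module IntermediateField

namespace IntermediateField

variable {K E : Type*} [Field K] [Field E] [Algebra K E]

theorem finiteDimensional_of_le {X Y : IntermediateField K E}
    [FiniteDimensional K Y] (h : X ≤ Y) : FiniteDimensional K X :=
  .of_injective (inclusion h).toLinearMap (inclusion h).injective

theorem finrank_mul_finrank_extendScalars {C A : IntermediateField K E} (h : C ≤ A) :
    finrank K C * finrank C (extendScalars h) = finrank K A := by
  rw [← relfinrank_eq_finrank_of_le, finrank_bot_mul_relfinrank h]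

/-- Over `C = A ⊓ B`, the Galois extension `A` is linearly disjoint from `B`. -/
theorem finrank_sup_mul_finrank_inf (A B : IntermediateField K E) [FiniteDimensional K A]
    [FiniteDimensional K B] [IsGalois K A] :
    finrank K ↥(A ⊔ B) * finrank K ↥(A ⊓ B) = finrank K A * finrank K B := by
  set C := A ⊓ B
  have hA : C ≤ A := inf_le_left
  have hB : C ≤ B := inf_le_right
  have : FiniteDimensional K (extendScalars hA) := ‹FiniteDimensional K A›
  have : FiniteDimensional K (extendScalars hB) := ‹FiniteDimensional K B›
  have : FiniteDimensional C (extendScalars hA) := .right K C _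
  have : FiniteDimensional C (extendScalars hB) := .right K C _
  have : IsGalois K (extendScalars hA) := ‹IsGalois K A›
  have : IsGalois C (extendScalars hA) := IsGalois.tower_top_of_isGalois K C _
  have hdisj : extendScalars hA ⊓ extendScalars hB = ⊥ := by
    rw [extendScalars_inf]; exact extendScalars_self C
  have hsup := (LinearDisjoint.of_inf_eq_bot hdisj).finrank_sup
  rw [extendScalars_sup] at hsup
  rw [← finrank_mul_finrank_extendScalars hA, ← finrank_mul_finrank_extendScalars hB,
    ← finrank_mul_finrank_extendScalars (le_sup_of_le_left hA : C ≤ A ⊔ B), hsup]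
  ring

variable {F N X Y : IntermediateField K E} [FiniteDimensional K F] [FiniteDimensional K N]
  [IsGalois K F]

theorem finrank_sup_of_le_of_inf_eq_bot (hXN : X ≤ N) (hNF : N ⊓ F = ⊥) :
    finrank K ↥(X ⊔ F) = finrank K X * finrank K F := by
  have : FiniteDimensional K X := finiteDimensional_of_le hXN
  have hFX : F ⊓ X = ⊥ := by rw [inf_comm, eq_bot_iff, ← hNF]; exact inf_le_inf_right F hXN
  rw [sup_comm, (LinearDisjoint.of_inf_eq_bot hFX).finrank_sup, mul_comm]

theorem sup_inf_eq_of_le (hXN : X ≤ N) (hNF : N ⊓ F = ⊥) : (X ⊔ F) ⊓ N = X := by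
  have : FiniteDimensional K X := finiteDimensional_of_le hXN
  have hle : finrank K ↥((X ⊔ F) ⊓ N ⊔ F) ≤ finrank K ↥(X ⊔ F) :=
    finrank_le_of_le_right (sup_le inf_le_left le_sup_right)
  rw [finrank_sup_of_le_of_inf_eq_bot inf_le_right hNF,
    finrank_sup_of_le_of_inf_eq_bot hXN hNF] at hle
  have : FiniteDimensional K ↥((X ⊔ F) ⊓ N) := finiteDimensional_of_le inf_le_right
  exact (eq_of_le_of_finrank_le (le_inf le_sup_left hXN)
    (Nat.le_of_mul_le_mul_right hle finrank_pos)).symm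

theorem inf_sup_eq_of_le_sup [FiniteDimensional K Y] [IsGalois K Y] (hFY : F ≤ Y)
    (hYN : Y ≤ N ⊔ F) (hNF : N ⊓ F = ⊥) : Y ⊓ N ⊔ F = Y := by
  have hYN_sup : finrank K ↥(Y ⊔ N) ≤ finrank K N * finrank K F := by
    rw [← finrank_sup_of_le_of_inf_eq_bot le_rfl hNF]
    exact finrank_le_of_le_right (sup_le hYN le_sup_left)
  have hle : finrank K Y ≤ finrank K ↥(Y ⊓ N) * finrank K F := by
    refine Nat.le_of_mul_le_mul_right ?_ (finrank_pos (R := K) (M := N))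
    calc finrank K Y * finrank K N
        = finrank K ↥(Y ⊔ N) * finrank K ↥(Y ⊓ N) := (finrank_sup_mul_finrank_inf Y N).symm
      _ ≤ finrank K N * finrank K F * finrank K ↥(Y ⊓ N) := Nat.mul_le_mul_right _ hYN_sup
      _ = finrank K ↥(Y ⊓ N) * finrank K F * finrank K N := by ring
  rw [← finrank_sup_of_le_of_inf_eq_bot inf_le_right hNF] at hle
  exact eq_of_le_of_finrank_le (sup_le inf_le_left hFY) hle

end IntermediateField

section Magnification

variable {K : Type*} [Field K] {L F FL FM : IntermediateField K (AlgebraicClosure K)}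

theorem le_galoisClosure : L ≤ galoisClosure K L := le_normalClosure L

instance [FiniteDimensional K L] : FiniteDimensional K (galoisClosure K L) := by
  unfold galoisClosure; infer_instance

variable [PerfectField K]

instance : IsGalois K (galoisClosure K L) := by
  unfold galoisClosure; infer_instance

variable [FiniteDimensional K L] [FiniteDimensional K F] [IsGalois K F]

theorem IsMaxGaloisSubextension.eq_sup (hFM : IsMaxGaloisSubextension K FM (L ⊔ F))
    (hFL : IsMaxGaloisSubextension K FL L) (hdisj : galoisClosure K L ⊓ F = ⊥) :
    FM = FL ⊔ F := by
  have : FiniteDimensional K FL := finiteDimensional_of_le hFL.1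
  have : FiniteDimensional K FM := finiteDimensional_of_le hFM.1
  have : IsGalois K FL := hFL.2.1
  have : IsGalois K FM := hFM.2.1
  refine le_antisymm ?_ (hFM.2.2 _ (sup_le_sup_right hFL.1 F) inferInstance)
  have hF_FM : F ≤ FM := hFM.2.2 F le_sup_right ‹_›
  have hFM_sup : FM ≤ galoisClosure K L ⊔ F := hFM.1.trans (sup_le_sup_right le_galoisClosure F)
  have hFM_inf : FM ⊓ galoisClosure K L ≤ FL := hFL.2.2 _
    ((inf_le_inf_right _ hFM.1).trans (sup_inf_eq_of_le le_galoisClosure hdisj).le) inferInstance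
  calc FM = FM ⊓ galoisClosure K L ⊔ F := (inf_sup_eq_of_le_sup hF_FM hFM_sup hdisj).symm
    _ ≤ FL ⊔ F := sup_le_sup_right hFM_inf F

end Magnification

theorem stmt_19_general (K : Type*) [Field K] [PerfectField K]
    (L F M : IntermediateField K (AlgebraicClosure K))
    [FiniteDimensional K ↥L] [FiniteDimensional K ↥F]
    (hFgal : IsGalois K ↥F)
    (hdisj : galoisClosure K L ⊓ F = ⊥) (hcomp : L ⊔ F = M)
    (FL FM : IntermediateField K (AlgebraicClosure K))
    (hFL : IsMaxGaloisSubextension K FL L) (hFM : IsMaxGaloisSubextension K FM M) :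
    Module.finrank K ↥FM = Module.finrank K ↥F * Module.finrank K ↥FL ∧
    Module.finrank ↥FM ↥(IntermediateField.extendScalars hFM.1) =
      Module.finrank ↥FL ↥(IntermediateField.extendScalars hFL.1) := by
  subst hcomp
  have hFM_eq : FM = FL ⊔ F := hFM.eq_sup hFL hdisj
  have hdegM : finrank K ↥(L ⊔ F) = finrank K L * finrank K F :=
    finrank_sup_of_le_of_inf_eq_bot le_galoisClosure hdisj
  have hdegFM : finrank K FM = finrank K FL * finrank K F := by
    rw [hFM_eq]; exact finrank_sup_of_le_of_inf_eq_bot (hFL.1.trans le_galoisClosure) hdisj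
  refine ⟨by rw [hdegFM, mul_comm], ?_⟩
  have : FiniteDimensional K FM := finiteDimensional_of_le hFM.1
  apply Nat.eq_of_mul_eq_mul_left (finrank_pos (R := K) (M := FM))
  rw [finrank_mul_finrank_extendScalars, hdegM, hdegFM,
    ← finrank_mul_finrank_extendScalars hFL.1]
  ring

/-- Let `K` be a perfect field and suppose `M/K` is obtained by strong cluster
magnification from `L/K` with magnification factor `d = [F : K]` (via a finite Galois
extension `F/K` with `L̃ ∩ F = K` and `LF = M`, and `[L : K] > 2`). Let `F_L` (resp. `F_M`)
be the unique largest intermediate field of `L/K` (resp. of `M/K`) Galois over `K`, so that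
`t_K(L) = [F_L : K]`, `u_K(L) = [L : F_L]`, and similarly for `M`. Then
`t_K(M) = d · t_K(L)` and `u_K(M) = u_K(L)`. -/
theorem stmt_19 (K : Type*) [Field K] [PerfectField K]
    (L F M : IntermediateField K (AlgebraicClosure K))
    [FiniteDimensional K ↥L] [FiniteDimensional K ↥F] [FiniteDimensional K ↥M]
    (hdeg : 2 < Module.finrank K ↥L) (hFgal : IsGalois K ↥F)
    (hdisj : galoisClosure K L ⊓ F = ⊥) (hcomp : L ⊔ F = M)
    (FL FM : IntermediateField K (AlgebraicClosure K))
    (hFL : IsMaxGaloisSubextension K FL L) (hFM : IsMaxGaloisSubextension K FM M) :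
    Module.finrank K ↥FM = Module.finrank K ↥F * Module.finrank K ↥FL ∧
    Module.finrank ↥FM ↥(IntermediateField.extendScalars hFM.1) =
      Module.finrank ↥FL ↥(IntermediateField.extendScalars hFL.1) :=
  stmt_19_general K L F M hFgal hdisj hcomp FL FM hFL hFM
end
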